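/- Every strict m-isometry on ℝ² satisfies m = 1 or m = 3, and every strict 3-isometry on ℝ² has the form ±I + Q where Q is a nonzero 2×2 nilpotent matrix. -/

import Mathlib

open scoped BigOperators

/-- `T` is an `m`-isometry on a real Hilbert space. -/
def IsMIsometryR {H : Type*} [NormedAddCommGroup H] [InnerProductSpace ℝ H]
    (m : ℕ) (T : H →L[ℝ] H) : Prop :=
  ∀ x : H, ∑ k ∈ Finset.range (m + 1),
    (-1 : ℝ) ^ (m - k) * (m.choose k) * ‖(T ^ k) x‖ ^ 2 = 0

/-!
For a 2×2 matrix `A` with trace `t` and determinant `d`, every orbit `k ↦ ‖Aᵏx‖²` satisfies the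
linear recurrence whose characteristic polynomial `p = X³ - (t² - d)X² + d(t² - d)X - d³` is that
of `S ↦ AᵀSA` on symmetric matrices, with roots `λ₁², λ₁λ₂, λ₂²`. An `m`-isometry is an operator
all of whose orbits are killed by `Δᵐ`; since `Xᵐ` is coprime to `p(X + 1) / Xᵏ`, all orbits are
then killed by `Δᵏ`, where `k ≤ 3` is the multiplicity of `1` as a root of `p`. If `k ≤ 2` the
operator is a 2-isometry, and a 2-isometry of `ℝ²` is an isometry: the Gram determinant of the
orbits of the two basis vectors is both `(d²)ⁿ` and a polynomial of degree at most 2 in `n`.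
If `k = 3` then `p = (X - 1)³`, so `d = 1` and `t = ±2`, and by Cayley–Hamilton `A ∓ 1` squares
to zero.
-/

open Polynomial fwdDiff Finset Matrix

theorem Module.End.pow_natTrailingDegree_apply_eq_zero {K V : Type*} [Field K] [AddCommGroup V]
    [Module K V] (D : Module.End K V) {q : K[X]} (hq : q ≠ 0) {v : V} {M : ℕ}
    (hM : (D ^ M) v = 0) (hqv : aeval D q v = 0) : (D ^ q.natTrailingDegree) v = 0 := by
  obtain ⟨r, hqr⟩ : X ^ q.natTrailingDegree ∣ q :=
    X_pow_dvd_iff.2 fun d hd => coeff_eq_zero_of_lt_natTrailingDegree hd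
  have hr : ¬ X ∣ r := by
    rw [X_dvd_iff, ← coeff_X_pow_mul _ q.natTrailingDegree, zero_add, ← hqr]
    exact mt trailingCoeff_eq_zero.1 hq
  have hcop : IsCoprime (X ^ M) r := (irreducible_X.coprime_iff_not_dvd.2 hr).pow_left
  refine Submodule.disjoint_def.1 (disjoint_ker_aeval_of_isCoprime D hcop) _ ?_ ?_
  · rw [LinearMap.mem_ker, map_pow, aeval_X, ← Module.End.mul_apply, ← pow_add, add_comm, pow_add,
      Module.End.mul_apply, hM, map_zero]
  · rwa [LinearMap.mem_ker, ← Module.End.mul_apply, ← aeval_X_pow (R := K), ← map_mul, mul_comm,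
      ← hqr]

@[simps]
def fwdDiffLinear : Module.End ℝ (ℕ → ℝ) where
  toFun := Δ_[1]
  map_add' := fwdDiff_add 1
  map_smul' := fwdDiff_const_smul 1

lemma fwdDiffLinear_pow_apply (n : ℕ) (f : ℕ → ℝ) : (fwdDiffLinear ^ n) f = (Δ_[1])^[n] f :=
  Module.End.pow_apply _ _ _

theorem eq_add_mul_of_fwdDiff_iter_two_eq_zero {f : ℕ → ℝ} (h : (Δ_[1])^[2] f = 0) (n : ℕ) :
    f n = f 0 + n * (f 1 - f 0) := by
  have hstep (k : ℕ) : f (k + 1) - f k = f 1 - f 0 := by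
    induction k with
    | zero => rfl
    | succ k ih =>
      have hk := congr_fun h k
      rw [Function.iterate_succ_apply, Function.iterate_one] at hk
      simp only [fwdDiff, Pi.zero_apply] at hk
      linear_combination hk + ih
  induction n with
  | zero => simp
  | succ n ih => push_cast; linear_combination hstep n + ih

-- The right-hand side is `det (1 + n • !![p, r; r, q])`.
theorem eq_zero_of_forall_pow_eq {δ p q r : ℝ}
    (h : ∀ n : ℕ, δ ^ n = (1 + n * p) * (1 + n * q) - (n * r) ^ 2) : p = 0 ∧ q = 0 ∧ r = 0 := by
  have h1 := h 1
  have h2 := h 2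
  have h3 := h 3
  push_cast at h1 h2 h3
  obtain rfl : δ = 1 := by
    have hcube : (δ - 1) ^ 3 = 0 := by linear_combination h3 - 3 * h2 + 3 * h1
    linear_combination pow_eq_zero_iff three_ne_zero |>.1 hcube
  have he : p * q - r ^ 2 = 0 := by linear_combination (2 * h1 - h2) / 2
  have hs : p + q = 0 := by linear_combination -h1 - he
  have hpr : p ^ 2 + r ^ 2 = 0 := by linear_combination p * hs - he
  obtain ⟨hp, hr⟩ := (add_eq_zero_iff_of_nonneg (sq_nonneg p) (sq_nonneg r)).1 hpr
  obtain rfl := pow_eq_zero_iff two_ne_zero |>.1 hp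
  exact ⟨rfl, by linear_combination hs, pow_eq_zero_iff two_ne_zero |>.1 hr⟩

theorem Matrix.sq_sub_smul_one_eq_zero {R : Type*} [CommRing R] [Nontrivial R]
    {A : Matrix (Fin 2) (Fin 2) R} {c : R} (ht : A.trace = 2 * c) (hd : A.det = c ^ 2) :
    (A - c • 1) ^ 2 = 0 := by
  have hCH : A ^ 2 - A.trace • A + A.det • 1 = 0 := by
    simpa [charpoly_fin_two, Algebra.algebraMap_eq_smul_one] using A.aeval_self_charpoly
  rw [← hCH, ht, hd, sq, sq, sub_mul, mul_sub, mul_sub, smul_mul_smul_comm]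
  simp only [smul_mul_assoc, mul_smul_comm, one_mul, mul_one]
  module

section InnerProductSpace

variable {H : Type*} [NormedAddCommGroup H] [InnerProductSpace ℝ H]

def normSqOrbit (T : H →L[ℝ] H) (x : H) (k : ℕ) : ℝ := ‖(T ^ k) x‖ ^ 2

lemma normSqOrbit_add (T : H →L[ℝ] H) (x : H) (n k : ℕ) :
    normSqOrbit T x (n + k) = normSqOrbit T ((T ^ n) x) k := by
  rw [normSqOrbit, normSqOrbit, add_comm, pow_add]
  rfl

lemma fwdDiff_iter_normSqOrbit (T : H →L[ℝ] H) (x : H) (m n : ℕ) :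
    (Δ_[1])^[m] (normSqOrbit T x) n =
      ∑ k ∈ range (m + 1), (-1 : ℝ) ^ (m - k) * m.choose k * ‖(T ^ k) ((T ^ n) x)‖ ^ 2 := by
  rw [fwdDiff_iter_eq_sum_shift]
  refine sum_congr rfl fun k _ => ?_
  rw [smul_eq_mul, mul_one, normSqOrbit_add, normSqOrbit, zsmul_eq_mul]
  push_cast
  rfl

theorem isMIsometryR_iff_fwdDiff_iter {m : ℕ} {T : H →L[ℝ] H} :
    IsMIsometryR m T ↔ ∀ x, (Δ_[1])^[m] (normSqOrbit T x) = 0 := by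
  simp only [IsMIsometryR, funext_iff, fwdDiff_iter_normSqOrbit]
  exact ⟨fun h x n => h _, fun h x => by simpa using h x 0⟩

theorem IsMIsometryR.mono {m n : ℕ} {T : H →L[ℝ] H} (h : IsMIsometryR m T) (hmn : m ≤ n) :
    IsMIsometryR n T := by
  rw [isMIsometryR_iff_fwdDiff_iter] at h ⊢
  intro x
  rw [← Nat.sub_add_cancel hmn, Function.iterate_add_apply, h x]
  exact Function.iterate_fixed (fwdDiff_const 1 0) _

theorem isMIsometryR_one_iff {T : H →L[ℝ] H} : IsMIsometryR 1 T ↔ ∀ x, ‖T x‖ = ‖x‖ := by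
  refine forall_congr' fun x => ?_
  simp [sum_range_succ, ← sub_eq_neg_add, sub_eq_zero, pow_left_inj₀]

end InnerProductSpace

local notation "ℝ²" => EuclideanSpace ℝ (Fin 2)
local notation "toCLM" => Matrix.toEuclideanCLM (𝕜 := ℝ) (n := Fin 2)

lemma EuclideanSpace.norm_sq_fin_two (x : ℝ²) : ‖x‖ ^ 2 = x 0 ^ 2 + x 1 ^ 2 := by
  simp [EuclideanSpace.norm_sq_eq, Fin.sum_univ_two]

section FinTwo

variable (A : Matrix (Fin 2) (Fin 2) ℝ)

lemma toEuclideanCLM_apply_fin_two (x : ℝ²) (i : Fin 2) :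
    toCLM A x i = A i 0 * x 0 + A i 1 * x 1 := by
  simp [mulVec, dotProduct, Fin.sum_univ_two]

theorem normSqOrbit_toEuclideanCLM (a b : ℝ) (n : ℕ) :
    normSqOrbit (toCLM A) !₂[a, b] n = ((A ^ n) 0 0 * a + (A ^ n) 0 1 * b) ^ 2
      + ((A ^ n) 1 0 * a + (A ^ n) 1 1 * b) ^ 2 := by
  rw [normSqOrbit, ← map_pow, EuclideanSpace.norm_sq_fin_two, toEuclideanCLM_apply_fin_two,
    toEuclideanCLM_apply_fin_two]
  rfl

theorem normSqOrbit_toEuclideanCLM_add_three (x : ℝ²) (n : ℕ) :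
    normSqOrbit (toCLM A) x (n + 3) = (A.trace ^ 2 - A.det) * normSqOrbit (toCLM A) x (n + 2)
      - A.det * (A.trace ^ 2 - A.det) * normSqOrbit (toCLM A) x (n + 1)
      + A.det ^ 3 * normSqOrbit (toCLM A) x n := by
  rw [normSqOrbit_add, normSqOrbit_add, normSqOrbit_add, ← add_zero n, normSqOrbit_add, add_zero]
  generalize (toCLM A ^ n) x = y
  simp only [normSqOrbit, pow_succ (toCLM A), pow_zero, one_mul, mul_apply_eq_comp,
    one_apply_eq_self, EuclideanSpace.norm_sq_fin_two, toEuclideanCLM_apply_fin_two, trace_fin_two,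
    det_fin_two]
  ring

/-- `p(X + 1)` for the characteristic polynomial `p` of `normSqOrbit_toEuclideanCLM_add_three`,
so that it acts on sequences through `Δ` rather than through the shift. -/
noncomputable def normSqRecurrencePoly : ℝ[X] :=
  let s := A.trace ^ 2 - A.det
  X ^ 3 + C (3 - s) * X ^ 2 + C (3 - 2 * s + A.det * s) * X + C (1 - s + A.det * s - A.det ^ 3)

theorem aeval_normSqRecurrencePoly_normSqOrbit (x : ℝ²) :
    aeval fwdDiffLinear (normSqRecurrencePoly A) (normSqOrbit (toCLM A) x) = 0 := by
  ext n
  simp only [normSqRecurrencePoly, map_add, map_mul, aeval_C, aeval_X_pow, aeval_X,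
    LinearMap.add_apply, Module.End.mul_apply, Module.algebraMap_end_apply, fwdDiffLinear_pow_apply,
    fwdDiffLinear_apply, Pi.add_apply, Pi.smul_apply, smul_eq_mul, Pi.zero_apply,
    Function.iterate_succ_apply', Function.iterate_zero_apply, fwdDiff, add_assoc, Nat.reduceAdd]
  linear_combination normSqOrbit_toEuclideanCLM_add_three A x n

theorem gram_normSqOrbit_toEuclideanCLM (n : ℕ) :
    normSqOrbit (toCLM A) !₂[1, 0] n * normSqOrbit (toCLM A) !₂[0, 1] n
      - ((normSqOrbit (toCLM A) !₂[1, 1] n - normSqOrbit (toCLM A) !₂[1, 0] n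
        - normSqOrbit (toCLM A) !₂[0, 1] n) / 2) ^ 2 = (A.det ^ 2) ^ n := by
  rw [← pow_mul, mul_comm 2 n, pow_mul, ← det_pow, det_fin_two]
  simp only [normSqOrbit_toEuclideanCLM]
  ring

variable {A}

theorem isMIsometryR_one_of_isMIsometryR_two (h : IsMIsometryR 2 (toCLM A)) :
    IsMIsometryR 1 (toCLM A) := by
  rw [isMIsometryR_iff_fwdDiff_iter] at h
  have hgram := gram_normSqOrbit_toEuclideanCLM A
  set f := normSqOrbit (toCLM A)
  have hf x n := eq_add_mul_of_fwdDiff_iter_two_eq_zero (h x) n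
  have h10 : f !₂[1, 0] 0 = 1 := by simp [f, normSqOrbit_toEuclideanCLM]
  have h01 : f !₂[0, 1] 0 = 1 := by simp [f, normSqOrbit_toEuclideanCLM]
  have h11 : f !₂[1, 1] 0 = 2 := by norm_num [f, normSqOrbit_toEuclideanCLM]
  obtain ⟨hp, hq, hr⟩ := eq_zero_of_forall_pow_eq (δ := A.det ^ 2) (p := f !₂[1, 0] 1 - 1)
      (q := f !₂[0, 1] 1 - 1) (r := (f !₂[1, 1] 1 - f !₂[1, 0] 1 - f !₂[0, 1] 1) / 2) fun n => by
    rw [← hgram n, hf !₂[1, 0] n, hf !₂[0, 1] n, hf !₂[1, 1] n, h10, h01, h11]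
    ring
  simp only [f, normSqOrbit_toEuclideanCLM, pow_one] at hp hq hr
  refine isMIsometryR_one_iff.2 fun x => ?_
  rw [← sq_eq_sq₀ (norm_nonneg _) (norm_nonneg _), EuclideanSpace.norm_sq_fin_two,
    EuclideanSpace.norm_sq_fin_two, toEuclideanCLM_apply_fin_two, toEuclideanCLM_apply_fin_two]
  linear_combination x 0 ^ 2 * hp + x 1 ^ 2 * hq + 2 * x 0 * x 1 * hr

theorem IsMIsometryR.isMIsometryR_one_or_three {m : ℕ} (h : IsMIsometryR m (toCLM A)) :
    IsMIsometryR 1 (toCLM A) ∨ IsMIsometryR 3 (toCLM A) ∧ A.det = 1 ∧ A.trace ^ 2 = 4 := by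
  set q := normSqRecurrencePoly A
  have hq3 : q.coeff 3 = 1 := by
    simp only [q, normSqRecurrencePoly, coeff_add, coeff_C_mul, coeff_X_pow, coeff_X, coeff_C,
      Nat.reduceEqDiff, ↓reduceIte, mul_zero, add_zero]
  have hq : q ≠ 0 := fun h0 => by simp [h0] at hq3
  have hk : IsMIsometryR q.natTrailingDegree (toCLM A) := by
    rw [isMIsometryR_iff_fwdDiff_iter] at h ⊢
    intro x
    rw [← fwdDiffLinear_pow_apply]
    exact fwdDiffLinear.pow_natTrailingDegree_apply_eq_zero hq
      (by rw [fwdDiffLinear_pow_apply, h x]) (aeval_normSqRecurrencePoly_normSqOrbit A x)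
  by_cases hk2 : q.natTrailingDegree ≤ 2
  · exact .inl (isMIsometryR_one_of_isMIsometryR_two (hk.mono hk2))
  have hc (i : ℕ) (hi : i < 3) : q.coeff i = 0 := coeff_eq_zero_of_lt_natTrailingDegree (by omega)
  have hc1 := hc 1 (by norm_num)
  have hc2 := hc 2 (by norm_num)
  simp only [q, normSqRecurrencePoly, coeff_add, coeff_C_mul, coeff_X_pow, coeff_X, coeff_C,
    Nat.reduceEqDiff, ↓reduceIte, mul_zero, mul_one, add_zero, zero_add, one_ne_zero] at hc1 hc2
  have hdet : A.det = 1 := by linear_combination (hc1 + (A.det - 2) * hc2) / 3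
  exact .inr ⟨hk.mono (natTrailingDegree_le_of_ne_zero (hq3 ▸ one_ne_zero)), hdet,
    by linear_combination hdet - hc2⟩

theorem isNilpotent_toEuclideanCLM_sub_one_or_add_one (hdet : A.det = 1) (htr : A.trace ^ 2 = 4) :
    IsNilpotent (toCLM A - 1) ∨ IsNilpotent (toCLM A + 1) := by
  have hnil {c : ℝ} (htc : A.trace = 2 * c) (hc : c ^ 2 = 1) : IsNilpotent (toCLM (A - c • 1)) :=
    ⟨2, by rw [← map_pow, sq_sub_smul_one_eq_zero htc (by rw [hdet, hc]), map_zero]⟩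
  rcases sq_eq_sq_iff_eq_or_eq_neg.1 (htr.trans (by norm_num : (4 : ℝ) = 2 ^ 2)) with h | h
  · left
    simpa using hnil (c := 1) (by linear_combination h) (by norm_num)
  · right
    simpa using hnil (c := -1) (by linear_combination h) (by norm_num)

end FinTwo

theorem stmt9 :
    (∀ (m : ℕ), 1 ≤ m →
      ∀ T : EuclideanSpace ℝ (Fin 2) →L[ℝ] EuclideanSpace ℝ (Fin 2),
      IsMIsometryR m T → ¬ IsMIsometryR (m - 1) T → m = 1 ∨ m = 3) ∧
    (∀ T : EuclideanSpace ℝ (Fin 2) →L[ℝ] EuclideanSpace ℝ (Fin 2),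
      IsMIsometryR 3 T → ¬ IsMIsometryR 2 T →
      ∃ Q : EuclideanSpace ℝ (Fin 2) →L[ℝ] EuclideanSpace ℝ (Fin 2),
        Q ≠ 0 ∧ IsNilpotent Q ∧ (T = 1 + Q ∨ T = -1 + Q)) := by
  refine ⟨fun m hm T hT hT' => ?_, fun T hT hT' => ?_⟩
  all_goals obtain ⟨A, rfl⟩ : ∃ A, toCLM A = T := ⟨_, StarAlgEquiv.apply_symm_apply _ T⟩
  · rcases hT.isMIsometryR_one_or_three with h1 | ⟨h3, -⟩
    · exact .inl (by by_contra hm1; exact hT' (h1.mono (by omega)))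
    · have hm2 : m ≠ 2 := by rintro rfl; exact hT' (isMIsometryR_one_of_isMIsometryR_two hT)
      have hm3 : m ≤ 3 := by by_contra hm3; exact hT' (h3.mono (by omega))
      omega
  · rcases hT.isMIsometryR_one_or_three with h1 | ⟨-, hdet, htr⟩
    · exact absurd (h1.mono one_le_two) hT'
    rcases isNilpotent_toEuclideanCLM_sub_one_or_add_one hdet htr with hQ | hQ
    · refine ⟨_, fun hQ0 => hT' ((isMIsometryR_one_iff.2 fun x => ?_).mono one_le_two), hQ,
        .inl (by abel)⟩
      rw [sub_eq_zero.1 hQ0, one_apply_eq_self]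
    · refine ⟨_, fun hQ0 => hT' ((isMIsometryR_one_iff.2 fun x => ?_).mono one_le_two), hQ,
        .inr (by abel)⟩
      rw [eq_neg_of_add_eq_zero_left hQ0, _root_.neg_apply, one_apply_eq_self, norm_neg]
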